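/- Let b ∈ (0,3], c₀ ∈ ℝ \ {0}, α < β, and suppose u₀ ∈ C¹(ℝ) satisfies u₀ ≡ c₀ on [α,β], A_b(u₀) := ∫_{-∞}^α e^y F_b(u₀)(y) dy = e^α bc₀²/2, and B_b(u₀) := ∫_β^∞ e^{-y} F_b(u₀)(y) dy = e^{-β} bc₀²/2, where F_b(w) = (b/2)w² + ((3-b)/2)(w')². Then for every x ∈ [α,β], ∫_{-∞}^{∞} sgn(x-y) e^{-|x-y|} F_b(u₀)(y) dy = 0. -/
import Mathlib


open Real Set MeasureTheory

/-- If `u₀ ∈ C¹(ℝ)` equals `c₀` on `[α,β]`, `A_b(u₀) = e^α bc₀²/2` and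
`B_b(u₀) = e^{-β} bc₀²/2`, then `∫ sgn(x-y)e^{-|x-y|}F_b(u₀)(y)dy = 0` on `[α,β]`. -/
theorem stmt6 (b c₀ α β : ℝ) (hb : b ∈ Set.Ioc (0 : ℝ) 3) (hc : c₀ ≠ 0) (hαβ : α < β)
    (u₀ : ℝ → ℝ) (hu : ContDiff ℝ 1 u₀)
    (hconst : ∀ x ∈ Set.Icc α β, u₀ x = c₀)
    (F : ℝ → ℝ)
    (hF : ∀ y : ℝ, F y = (b / 2) * (u₀ y) ^ 2 + ((3 - b) / 2) * (deriv u₀ y) ^ 2)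
    (hintA : IntegrableOn (fun y => Real.exp y * F y) (Set.Iio α))
    (hintB : IntegrableOn (fun y => Real.exp (-y) * F y) (Set.Ioi β))
    (hA : (∫ y in Set.Iio α, Real.exp y * F y) = Real.exp α * (b * c₀ ^ 2 / 2))
    (hB : (∫ y in Set.Ioi β, Real.exp (-y) * F y) = Real.exp (-β) * (b * c₀ ^ 2 / 2)) :
    ∀ x ∈ Set.Icc α β,
      (∫ y : ℝ, Real.sign (x - y) * Real.exp (-|x - y|) * F y) = 0 := by
  intro x hx
  set K := b * c₀ ^ 2 / 2 with hK
  have hFc : Continuous F := by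
    have hFeq : F = fun y => (b / 2) * (u₀ y) ^ 2 + ((3 - b) / 2) * (deriv u₀ y) ^ 2 :=
      funext hF
    rw [hFeq]
    exact (continuous_const.mul (hu.continuous.pow 2)).add
      (continuous_const.mul ((hu.continuous_deriv le_rfl).pow 2))
  have hF0 : ∀ y ∈ Ioo α β, F y = K := by
    intro y hy
    have hd : deriv u₀ y = 0 := by
      have hev : u₀ =ᶠ[nhds y] fun _ => c₀ :=
        Filter.eventually_of_mem (isOpen_Ioo.mem_nhds hy)
          (fun z hz => hconst z (Ioo_subset_Icc_self hz))
      rw [hev.deriv_eq, deriv_const]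
    rw [hF, hconst y (Ioo_subset_Icc_self hy), hd, hK]
    ring
  have hdisj1 : Disjoint (Iio α) (Ico α x) :=
    Set.disjoint_left.mpr (fun y hy hy2 => absurd hy2.1 (not_le.mpr hy))
  have hdisj2 : Disjoint (Ioc x β) (Ioi β) :=
    Set.disjoint_left.mpr (fun y hy hy2 => absurd hy.2 (not_le.mpr hy2))
  have hIco : IntegrableOn (fun y => Real.exp y * F y) (Ico α x) :=
    ((continuous_exp.mul hFc).integrableOn_Icc).mono_set Ico_subset_Icc_self
  have hIoc : IntegrableOn (fun y => Real.exp (-y) * F y) (Ioc x β) :=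
    (((continuous_exp.comp continuous_neg).mul hFc).integrableOn_Icc).mono_set
      Ioc_subset_Icc_self
  have hIio : IntegrableOn (fun y => Real.exp y * F y) (Iio x) := by
    rw [← Iio_union_Ico_eq_Iio hx.1]
    exact hintA.union hIco
  have hIoi : IntegrableOn (fun y => Real.exp (-y) * F y) (Ioi x) := by
    rw [← Ioc_union_Ioi_eq_Ioi hx.2]
    exact hIoc.union hintB
  -- values of the half-line integrals
  have hI1 : (∫ y in Iio x, Real.exp y * F y) = Real.exp x * K := by
    rw [← Iio_union_Ico_eq_Iio hx.1,
      setIntegral_union hdisj1 measurableSet_Ico hintA hIco, hA]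
    have h2 : (∫ y in Ico α x, Real.exp y * F y) = (Real.exp x - Real.exp α) * K := by
      rw [integral_Ico_eq_integral_Ioo]
      rw [setIntegral_congr_fun measurableSet_Ioo
        (fun y hy => by rw [hF0 y ⟨hy.1, lt_of_lt_of_le hy.2 hx.2⟩])]
      rw [integral_mul_const]
      congr 1
      rw [← integral_Ioc_eq_integral_Ioo, ← intervalIntegral.integral_of_le hx.1,
        integral_exp]
    rw [h2]; ring
  have hI2 : (∫ y in Ioi x, Real.exp (-y) * F y) = Real.exp (-x) * K := by
    rw [← Ioc_union_Ioi_eq_Ioi hx.2,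
      setIntegral_union hdisj2 measurableSet_Ioi hIoc hintB, hB]
    have h2 : (∫ y in Ioc x β, Real.exp (-y) * F y)
        = (Real.exp (-x) - Real.exp (-β)) * K := by
      rw [integral_Ioc_eq_integral_Ioo]
      rw [setIntegral_congr_fun measurableSet_Ioo
        (fun y hy => by rw [hF0 y ⟨lt_of_le_of_lt hx.1 hy.1, hy.2⟩])]
      rw [integral_mul_const]
      congr 1
      rw [← integral_Ioc_eq_integral_Ioo, ← intervalIntegral.integral_of_le hx.2]
      have : (∫ y in x..β, Real.exp (-y)) = Real.exp (-x) - Real.exp (-β) := by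
        have := intervalIntegral.integral_comp_neg (a := x) (b := β) fun y => Real.exp y
        rw [this, integral_exp]
      exact this
    rw [h2]; ring
  -- decompose the integrand
  have hdecomp : (fun y : ℝ => Real.sign (x - y) * Real.exp (-|x - y|) * F y)
      = fun y => (Iio x).indicator (fun y => Real.exp (-x) * (Real.exp y * F y)) y
        + (Ioi x).indicator (fun y => -(Real.exp x * (Real.exp (-y) * F y))) y := by
    funext y
    rcases lt_trichotomy y x with h | h | h
    · have h1 : (0:ℝ) < x - y := by linarith
      rw [Set.indicator_of_mem (mem_Iio.mpr h),
        Set.indicator_of_notMem (by simp [mem_Ioi]; linarith),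
        Real.sign_of_pos h1, abs_of_pos h1, add_zero,
        show -(x - y) = -x + y by ring, Real.exp_add]
      ring
    · subst h
      simp
    · have h1 : x - y < 0 := by linarith
      rw [Set.indicator_of_notMem (by simp [mem_Iio]; linarith),
        Set.indicator_of_mem (mem_Ioi.mpr h),
        Real.sign_of_neg h1, abs_of_neg h1, zero_add,
        show - -(x - y) = x + -y by ring, Real.exp_add]
      ring
  rw [hdecomp]
  have hint1 : Integrable ((Iio x).indicator fun y => Real.exp (-x) * (Real.exp y * F y)) := by
    rw [integrable_indicator_iff measurableSet_Iio]
    exact hIio.const_mul _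
  have hint2 : Integrable ((Ioi x).indicator fun y =>
      -(Real.exp x * (Real.exp (-y) * F y))) := by
    rw [integrable_indicator_iff measurableSet_Ioi]
    exact ((hIoi.const_mul (Real.exp x)).neg)
  rw [integral_add hint1 hint2, integral_indicator measurableSet_Iio,
    integral_indicator measurableSet_Ioi, integral_const_mul, integral_neg,
    integral_const_mul, hI1, hI2]
  ring
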